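/- Let A be a max-automaton over Σ_I × Σ_O with n states and k counters. If x ∈ Σ_I^* lies in a finite ≈_0-equivalence class, then |x| < 2^{(n · 4^{k²+k})^{2n}}. -/

import Mathlib

/-- Counter operations over a set `C` of counters. -/
inductive CounterOp (C : Type*) where
  | inc : C → CounterOp C
  | reset : C → CounterOp C
  | max : C → C → C → CounterOp C

/-- Applying a single counter operation to a counter valuation. -/
def applyOp {C : Type*} [DecidableEq C] (ν : C → ℕ) : CounterOp C → C → ℕ
  | .inc c => Function.update ν c (ν c + 1)
  | .reset c => Function.update ν c 0
  | .max c c₀ c₁ => Function.update ν c (Nat.max (ν c₀) (ν c₁))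

/-- Applying a finite sequence of counter operations to a counter valuation. -/
def applyOps {C : Type*} [DecidableEq C] (ν : C → ℕ) : List (CounterOp C) → C → ℕ
  | [] => ν
  | op :: π => applyOps (applyOp ν op) π

/-- The transfer relation of a single counter operation. -/
def opTransfers {C : Type*} : CounterOp C → C → C → Prop
  | .inc _, c, d => c = d
  | .reset e, c, d => c = d ∧ c ≠ e
  | .max e c₀ c₁, c, d => (c = d ∧ c ≠ e) ∨ ((c = c₀ ∨ c = c₁) ∧ d = e)

/-- `Transfers π c d`: the sequence `π` of counter operations transfers counter `c`
to counter `d`. -/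
def Transfers {C : Type*} : List (CounterOp C) → C → C → Prop
  | [], c, d => c = d
  | op :: π, c, d => ∃ e, opTransfers op c e ∧ Transfers π e d

/-- `TransfersWith π c d m`: `π` transfers `c` to `d` with `m` increments, i.e. `π`
decomposes as `π₀ (inc e₁) π₁ ⋯ (inc e_m) π_m` with `π₀` transferring `c` to `e₁`,
`π_j` transferring `e_j` to `e_{j+1}`, and `π_m` transferring `e_m` to `d`. -/
inductive TransfersWith {C : Type*} : List (CounterOp C) → C → C → ℕ → Prop where
  | zero {π : List (CounterOp C)} {c d : C} :
      Transfers π c d → TransfersWith π c d 0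
  | step {π₀ π : List (CounterOp C)} {c e d : C} {m : ℕ} :
      Transfers π₀ c e → TransfersWith π e d m →
      TransfersWith (π₀ ++ CounterOp.inc e :: π) c d (m + 1)

/-- `π` is a `c`-trace of length `m`: it transfers some counter to `c` with `m` increments. -/
def IsTrace {C : Type*} (π : List (CounterOp C)) (c : C) (m : ℕ) : Prop :=
  ∃ c', TransfersWith π c' c m

/-- A (deterministic, complete) max-automaton with states `Q`, counters `C` and
input alphabet `S`: each transition is labeled by a finite sequence of counter
operations, and the acceptance condition is a boolean combination of the
per-counter conditions "`limsup ρ_c < ∞`". -/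
structure MaxAutomaton (S Q C : Type*) where
  init : Q
  step : Q → S → Q
  label : Q → S → List (CounterOp C)
  acc : (C → Prop) → Prop

namespace MaxAutomaton

variable {S Q C : Type*}

/-- The state of the (unique) run on `α` after `n` letters. -/
def stateAt (A : MaxAutomaton S Q C) (α : ℕ → S) : ℕ → Q
  | 0 => A.init
  | n + 1 => A.step (stateAt A α n) (α n)

/-- The counter valuation reached on the run on `α` after applying all operations
of the first `n` transition labels, starting from the zero valuation. -/
def valSeq [DecidableEq C] (A : MaxAutomaton S Q C) (α : ℕ → S) : ℕ → C → ℕ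
  | 0 => fun _ => 0
  | n + 1 => applyOps (valSeq A α n) (A.label (stateAt A α n) (α n))

/-- The run of `A` on `α` is accepting iff the acceptance condition is satisfied by
the assignment mapping counter `c` to true iff `limsup ρ_c < ∞`. -/
def Accepts [DecidableEq C] (A : MaxAutomaton S Q C) (α : ℕ → S) : Prop :=
  A.acc fun c => Filter.limsup (fun n => ((valSeq A α n c : ℕ) : ℕ∞)) Filter.atTop < ⊤

/-- The language of the max-automaton `A`. -/
def Lang [DecidableEq C] (A : MaxAutomaton S Q C) : Set (ℕ → S) :=
  { α | A.Accepts α }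

/-- The flattening of the labels of the first `n` transitions of the run of `A` on `α`. -/
def labelSeq (A : MaxAutomaton S Q C) (α : ℕ → S) : ℕ → List (CounterOp C)
  | 0 => []
  | n + 1 => labelSeq A α n ++ A.label (stateAt A α n) (α n)

/-- The run of `A` on `α` contains `π`: some prefix of the run ends with `π`. -/
def RunContains (A : MaxAutomaton S Q C) (α : ℕ → S) (π : List (CounterOp C)) : Prop :=
  ∃ n, π <:+ A.labelSeq α n

/-- The extended transition function `δ* : Q × Σ* → Q`. -/
def extStep (A : MaxAutomaton S Q C) : Q → List S → Q
  | q, [] => q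
  | q, a :: x => extStep A (A.step q a) x

/-- `ℓ(q, x)`: the sequence of transition labels along the run of `A` on `x` from `q`. -/
def labelsFrom (A : MaxAutomaton S Q C) : Q → List S → List (List (CounterOp C))
  | _, [] => []
  | q, a :: x => A.label q a :: labelsFrom A (A.step q a) x

end MaxAutomaton

/-- The flattening of a sequence of transition labels into a single sequence of
counter operations. -/
def flatLabels {C : Type*} (l : List (List (CounterOp C))) : List (CounterOp C) :=
  l.foldr (· ++ ·) []

/-- `l` has an infix whose flattening has a suffix that is a `c`-trace of length `m`. -/
def CondInfixTrace {C : Type*} (l : List (List (CounterOp C))) (c : C) (m : ℕ) : Prop :=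
  ∃ μ, μ <:+: l ∧ ∃ π, π <:+ flatLabels μ ∧ IsTrace π c m

/-- The flattening of `l` has a suffix that is a `c`-trace of length `m`. -/
def CondSuffixTrace {C : Type*} (l : List (List (CounterOp C))) (c : C) (m : ℕ) : Prop :=
  ∃ π, π <:+ flatLabels l ∧ IsTrace π c m

/-- The flattening of `l` transfers `c` to `d` with `m` increments. -/
def CondTransfer {C : Type*} (l : List (List (CounterOp C))) (c d : C) (m : ℕ) : Prop :=
  TransfersWith (flatLabels l) c d m

/-- `l` has a prefix whose flattening transfers `c` to `d` with `m` increments. -/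
def CondPrefixTransfer {C : Type*} (l : List (List (CounterOp C))) (c d : C) (m : ℕ) : Prop :=
  ∃ μ, μ <+: l ∧ TransfersWith (flatLabels μ) c d m

/-- The equivalence `≡_m^ops` on sequences of transition labels. -/
def EqOps {C : Type*} (m : ℕ) (l l' : List (List (CounterOp C))) : Prop :=
  ∀ (c d : C) (m' : ℕ), m' ≤ m →
    (CondInfixTrace l c m' ↔ CondInfixTrace l' c m') ∧
    (CondSuffixTrace l c m' ↔ CondSuffixTrace l' c m') ∧
    (CondTransfer l c d m' ↔ CondTransfer l' c d m') ∧
    (CondPrefixTransfer l c d m' ↔ CondPrefixTransfer l' c d m')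

/-- The equivalence `≡_m` on finite words: same transition profile and
`≡_m^ops`-equivalent label sequences from every state. -/
def EqWord {S Q C : Type*} (A : MaxAutomaton S Q C) (m : ℕ) (x x' : List S) : Prop :=
  (∀ q, A.extStep q x = A.extStep q x') ∧
  ∀ q, EqOps m (A.labelsFrom q x) (A.labelsFrom q x')

/-- The projected equivalence `≈_m` on words over the input alphabet: `x ≈_m x'` iff
for every `≡_m`-class `S` (given by a representative `w`), `x` is the projection of a
member of `S` iff `x'` is. -/
def EqProj {I O Q C : Type*} (A : MaxAutomaton (I × O) Q C) (m : ℕ) (x x' : List I) : Prop :=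
  ∀ w : List (I × O),
    (∃ u, EqWord A m w u ∧ u.map Prod.fst = x) ↔ (∃ u, EqWord A m w u ∧ u.map Prod.fst = x')


/-! ### Auxiliary development -/

section Aux

open List

variable {C : Type*}

theorem transfers_append (π σ : List (CounterOp C)) (c d : C) :
    Transfers (π ++ σ) c d ↔ ∃ e, Transfers π c e ∧ Transfers σ e d := by
  induction π generalizing c with
  | nil =>
    simp only [List.nil_append]
    constructor
    · intro h; exact ⟨c, rfl, h⟩
    · rintro ⟨e, rfl, h⟩; exact h
  | cons op π ih =>
    simp only [List.cons_append]
    show (∃ e, opTransfers op c e ∧ Transfers (π ++ σ) e d) ↔ _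
    constructor
    · rintro ⟨e, h1, h2⟩
      obtain ⟨f, h3, h4⟩ := (ih e).1 h2
      exact ⟨f, ⟨e, h1, h3⟩, h4⟩
    · rintro ⟨f, ⟨e, h1, h3⟩, h4⟩
      exact ⟨e, h1, (ih e).2 ⟨f, h3, h4⟩⟩

theorem transfersWith_zero_iff (π : List (CounterOp C)) (c d : C) :
    TransfersWith π c d 0 ↔ Transfers π c d := by
  constructor
  · intro h; cases h; assumption
  · exact TransfersWith.zero

theorem flatLabels_cons (a : List (CounterOp C)) (l : List (List (CounterOp C))) :
    flatLabels (a :: l) = a ++ flatLabels l := rfl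

theorem flatLabels_append (l r : List (List (CounterOp C))) :
    flatLabels (l ++ r) = flatLabels l ++ flatLabels r := by
  induction l with
  | nil => rfl
  | cons a l ih => simp only [List.cons_append, flatLabels_cons, ih, List.append_assoc]

theorem isTrace_nil_zero (c : C) : IsTrace ([] : List (CounterOp C)) c 0 :=
  ⟨c, TransfersWith.zero (show Transfers [] c c from rfl)⟩

theorem condInfixTrace_zero (l : List (List (CounterOp C))) (c : C) : CondInfixTrace l c 0 :=
  ⟨[], List.nil_infix, [], List.nil_suffix, isTrace_nil_zero c⟩

theorem condSuffixTrace_zero (l : List (List (CounterOp C))) (c : C) : CondSuffixTrace l c 0 :=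
  ⟨[], List.nil_suffix, isTrace_nil_zero c⟩

theorem condTransfer_append (l r : List (List (CounterOp C))) (c d : C) :
    CondTransfer (l ++ r) c d 0 ↔ ∃ e, CondTransfer l c e 0 ∧ CondTransfer r e d 0 := by
  simp only [CondTransfer, transfersWith_zero_iff, flatLabels_append, transfers_append]

theorem prefix_append_iff' {α : Type*} {μ l r : List α} :
    μ <+: l ++ r ↔ μ <+: l ∨ ∃ μ', μ = l ++ μ' ∧ μ' <+: r := by
  constructor
  · rintro ⟨t, ht⟩
    rcases List.append_eq_append_iff.1 ht with ⟨a, ha1, _⟩ | ⟨e, he1, he2⟩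
    · exact Or.inl ⟨a, ha1.symm⟩
    · exact Or.inr ⟨e, he1, ⟨t, he2.symm⟩⟩
  · rintro (h | ⟨μ', rfl, h⟩)
    · exact h.trans (l.prefix_append r)
    · exact (List.prefix_append_right_inj l).2 h

theorem condPrefixTransfer_append (l r : List (List (CounterOp C))) (c d : C) :
    CondPrefixTransfer (l ++ r) c d 0 ↔
      CondPrefixTransfer l c d 0 ∨ ∃ e, CondTransfer l c e 0 ∧ CondPrefixTransfer r e d 0 := by
  constructor
  · rintro ⟨μ, hpre, htr⟩
    rcases prefix_append_iff'.1 hpre with h | ⟨μ', rfl, h⟩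
    · exact Or.inl ⟨μ, h, htr⟩
    · rw [transfersWith_zero_iff, flatLabels_append, transfers_append] at htr
      obtain ⟨e, h1, h2⟩ := htr
      exact Or.inr ⟨e, (transfersWith_zero_iff _ _ _).2 h1,
        ⟨μ', h, (transfersWith_zero_iff _ _ _).2 h2⟩⟩
  · rintro (⟨μ, hpre, htr⟩ | ⟨e, h1, ⟨μ', hpre, h2⟩⟩)
    · exact ⟨μ, hpre.trans (l.prefix_append r), htr⟩
    · refine ⟨l ++ μ', (List.prefix_append_right_inj l).2 hpre, ?_⟩
      rw [transfersWith_zero_iff, flatLabels_append, transfers_append]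
      exact ⟨e, (transfersWith_zero_iff _ _ _).1 h1, (transfersWith_zero_iff _ _ _).1 h2⟩

/-- The boolean profile of a label sequence relevant for `≡₀^ops`. -/
abbrev OpsProf (C : Type*) := (C → Prop) × (C → Prop) × (C → C → Prop) × (C → C → Prop)

def opsProf (l : List (List (CounterOp C))) : OpsProf C :=
  (fun c => CondInfixTrace l c 0, fun c => CondSuffixTrace l c 0,
   fun c d => CondTransfer l c d 0, fun c d => CondPrefixTransfer l c d 0)

theorem eqOps_zero_iff (l l' : List (List (CounterOp C))) :
    EqOps 0 l l' ↔ opsProf l = opsProf l' := by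
  constructor
  · intro h
    simp only [opsProf, Prod.mk.injEq]
    refine ⟨?_, ?_, ?_, ?_⟩
    · funext c; exact propext (h c c 0 le_rfl).1
    · funext c; exact propext (h c c 0 le_rfl).2.1
    · funext c d; exact propext (h c d 0 le_rfl).2.2.1
    · funext c d; exact propext (h c d 0 le_rfl).2.2.2
  · intro h c d m' hm'
    interval_cases m'
    simp only [opsProf, Prod.mk.injEq] at h
    obtain ⟨h1, h2, h3, h4⟩ := h
    exact ⟨iff_of_eq (congrFun h1 c), iff_of_eq (congrFun h2 c),
      iff_of_eq (congrFun (congrFun h3 c) d), iff_of_eq (congrFun (congrFun h4 c) d)⟩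

theorem opsProf_append_congr {l l' r : List (List (CounterOp C))} (h : opsProf l = opsProf l') :
    opsProf (l ++ r) = opsProf (l' ++ r) := by
  simp only [opsProf, Prod.mk.injEq] at h
  obtain ⟨_, _, h3, h4⟩ := h
  have h3' : ∀ c d, CondTransfer l c d 0 ↔ CondTransfer l' c d 0 := fun c d =>
    iff_of_eq (congrFun (congrFun h3 c) d)
  have h4' : ∀ c d, CondPrefixTransfer l c d 0 ↔ CondPrefixTransfer l' c d 0 := fun c d =>
    iff_of_eq (congrFun (congrFun h4 c) d)
  simp only [opsProf, Prod.mk.injEq]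
  refine ⟨?_, ?_, ?_, ?_⟩
  · funext c
    exact propext (iff_of_true (condInfixTrace_zero _ c) (condInfixTrace_zero _ c))
  · funext c
    exact propext (iff_of_true (condSuffixTrace_zero _ c) (condSuffixTrace_zero _ c))
  · funext c d
    refine propext ?_
    rw [condTransfer_append, condTransfer_append]
    exact exists_congr fun e => and_congr (h3' c e) Iff.rfl
  · funext c d
    refine propext ?_
    rw [condPrefixTransfer_append, condPrefixTransfer_append]
    exact or_congr (h4' c d) (exists_congr fun e => and_congr (h3' c e) Iff.rfl)

variable {S Q : Type*}

/-- The full profile of a word: transition profile together with the per-state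
ops-profile of its label sequence. -/
def wordProf (A : MaxAutomaton S Q C) (x : List S) : (Q → Q) × (Q → OpsProf C) :=
  (fun q => A.extStep q x, fun q => opsProf (A.labelsFrom q x))

theorem eqWord_zero_iff (A : MaxAutomaton S Q C) (x x' : List S) :
    EqWord A 0 x x' ↔ wordProf A x = wordProf A x' := by
  constructor
  · intro ⟨h1, h2⟩
    simp only [wordProf, Prod.mk.injEq]
    exact ⟨funext h1, funext fun q => (eqOps_zero_iff _ _).1 (h2 q)⟩
  · intro h
    simp only [wordProf, Prod.mk.injEq] at h
    exact ⟨fun q => congrFun h.1 q, fun q => (eqOps_zero_iff _ _).2 (congrFun h.2 q)⟩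

theorem extStep_append (A : MaxAutomaton S Q C) (q : Q) (x y : List S) :
    A.extStep q (x ++ y) = A.extStep (A.extStep q x) y := by
  induction x generalizing q with
  | nil => rfl
  | cons a x ih =>
    simp only [List.cons_append, MaxAutomaton.extStep]
    exact ih _

theorem labelsFrom_append (A : MaxAutomaton S Q C) (q : Q) (x y : List S) :
    A.labelsFrom q (x ++ y) = A.labelsFrom q x ++ A.labelsFrom (A.extStep q x) y := by
  induction x generalizing q with
  | nil => rfl
  | cons a x ih =>
    simp only [List.cons_append, MaxAutomaton.labelsFrom, MaxAutomaton.extStep]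
    exact congrArg _ (ih _)

theorem wordProf_append_congr (A : MaxAutomaton S Q C) {u u' : List S} (v : List S)
    (h : wordProf A u = wordProf A u') : wordProf A (u ++ v) = wordProf A (u' ++ v) := by
  simp only [wordProf, Prod.mk.injEq] at h
  obtain ⟨h1, h2⟩ := h
  simp only [wordProf, Prod.mk.injEq]
  constructor
  · funext q
    rw [extStep_append, extStep_append, congrFun h1 q]
  · funext q
    rw [labelsFrom_append, labelsFrom_append, congrFun h1 q]
    exact opsProf_append_congr (congrFun h2 q)

end Aux

/-- A word of the input alphabet lying in a finite `≈_0`-class has length less than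
`2^((n · 4^(k²+k))^(2n))`. -/
theorem finite_eqProj_class_short
    {I O Q C : Type*} [Fintype I] [Fintype O] [Fintype Q] [Fintype C]
    (A : MaxAutomaton (I × O) Q C) (n k : ℕ)
    (hn : Fintype.card Q = n) (hk : Fintype.card C = k)
    (x : List I) (hfin : {x' : List I | EqProj A 0 x x'}.Finite) :
    x.length < 2 ^ ((n * 4 ^ (k ^ 2 + k)) ^ (2 * n)) := by
  classical
  -- the profile monoid
  set P := (Q → Q) × (Q → OpsProf C) with hP
  set T : List I → Set P := fun y => wordProf A '' {u : List (I × O) | u.map Prod.fst = y}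
    with hTdef
  -- right congruence of T
  have hTsub : ∀ (y y' v : List I), T y = T y' → T (y ++ v) ⊆ T (y' ++ v) := by
    intro y y' v hyy p hp
    obtain ⟨w, hw, rfl⟩ := hp
    have hlen : y.length ≤ (w.map Prod.fst).length := by rw [hw]; simp
    set w1 := w.take y.length with hw1
    set w2 := w.drop y.length with hw2
    have hw12 : w1 ++ w2 = w := List.take_append_drop _ _
    have h1 : w1.map Prod.fst = y := by
      rw [hw1, List.map_take, hw]; exact List.take_left
    have h2 : w2.map Prod.fst = v := by
      rw [hw2, List.map_drop, hw]; exact List.drop_left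
    have hmem : wordProf A w1 ∈ T y := ⟨w1, h1, rfl⟩
    rw [hyy] at hmem
    obtain ⟨u', hu', hp'⟩ := hmem
    simp only [Set.mem_setOf_eq] at hu'
    refine ⟨u' ++ w2, ?_, ?_⟩
    · simp only [Set.mem_setOf_eq, List.map_append, hu', h2]
    · rw [← hw12]
      exact wordProf_append_congr A w2 hp'
  have hTcong : ∀ (y y' v : List I), T y = T y' → T (y ++ v) = T (y' ++ v) := fun y y' v h =>
    Set.Subset.antisymm (hTsub y y' v h) (hTsub y' y v h.symm)
  -- EqProj at level 0 is equality of T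
  have hproj : ∀ y y' : List I, EqProj A 0 y y' ↔ T y = T y' := by
    intro y y'
    constructor
    · intro h
      ext p
      constructor
      · rintro ⟨w, hw, rfl⟩
        obtain ⟨u, hu1, hu2⟩ := (h w).1 ⟨w, (eqWord_zero_iff A w w).2 rfl, hw⟩
        exact ⟨u, hu2, ((eqWord_zero_iff A w u).1 hu1).symm⟩
      · rintro ⟨w, hw, rfl⟩
        obtain ⟨u, hu1, hu2⟩ := (h w).2 ⟨w, (eqWord_zero_iff A w w).2 rfl, hw⟩
        exact ⟨u, hu2, ((eqWord_zero_iff A w u).1 hu1).symm⟩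
    · intro h w
      constructor
      · rintro ⟨u, hu1, hu2⟩
        have hm : wordProf A u ∈ T y := ⟨u, hu2, rfl⟩
        rw [h] at hm
        obtain ⟨u', h1', h2'⟩ := hm
        exact ⟨u', (eqWord_zero_iff A w u').2
          (((eqWord_zero_iff A w u).1 hu1).trans h2'.symm), h1'⟩
      · rintro ⟨u, hu1, hu2⟩
        have hm : wordProf A u ∈ T y' := ⟨u, hu2, rfl⟩
        rw [← h] at hm
        obtain ⟨u', h1', h2'⟩ := hm
        exact ⟨u', (eqWord_zero_iff A w u').2
          (((eqWord_zero_iff A w u).1 hu1).trans h2'.symm), h1'⟩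
  -- cardinality bound
  letI : DecidableEq C := Classical.decEq C
  letI : DecidableEq Q := Classical.decEq Q
  have hn1 : 1 ≤ n := hn ▸ Fintype.card_pos_iff.2 ⟨A.init⟩
  have hbase : (2:ℕ) ^ k * (2 ^ k * ((2 ^ k) ^ k * (2 ^ k) ^ k)) = 4 ^ (k ^ 2 + k) := by
    rw [← pow_mul, ← pow_add, ← pow_add, ← pow_add,
      show (4:ℕ) = 2 ^ 2 from rfl, ← pow_mul]
    congr 1
    ring
  have hcardP : Fintype.card P = (n * 4 ^ (k ^ 2 + k)) ^ n := by
    have hProp : Fintype.card Prop = 2 := by simp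
    simp only [hP, Fintype.card_prod, Fintype.card_fun, hProp, hn, hk]
    rw [← hbase]
    ring
  have hcardS : Fintype.card (Set P) ≤ 2 ^ ((n * 4 ^ (k ^ 2 + k)) ^ (2 * n)) := by
    rw [Fintype.card_set, hcardP]
    exact Nat.pow_le_pow_right (by norm_num)
      (Nat.pow_le_pow_right (Nat.one_le_iff_ne_zero.2 (by positivity)) (by omega))
  -- pigeonhole + pumping
  by_contra hbig
  push_neg at hbig
  have hlt : Fintype.card (Set P) < Fintype.card (Fin (x.length + 1)) := by
    rw [Fintype.card_fin]
    omega
  obtain ⟨i, j, hij, hfij⟩ :=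
    Fintype.exists_ne_map_eq_of_card_lt (fun i : Fin (x.length + 1) => T (x.take i)) hlt
  have hne : (i : ℕ) ≠ (j : ℕ) := fun h => hij (Fin.ext h)
  obtain ⟨i, j, hlt', hfij⟩ : ∃ i j : Fin (x.length + 1), (i : ℕ) < (j : ℕ) ∧
      T (x.take i) = T (x.take j) := by
    rcases lt_or_gt_of_ne hne with h | h
    · exact ⟨i, j, h, hfij⟩
    · exact ⟨j, i, h, hfij.symm⟩
  set u := x.take i with hu
  set v := (x.take j).drop i with hv
  set w := x.drop j with hwdef
  have hjlen : (j : ℕ) ≤ x.length := by omega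
  have huv : u ++ v = x.take j := by
    have h : u = (x.take j).take i := by
      rw [hu, List.take_take]
      congr 1
      omega
    rw [h, hv]
    exact List.take_append_drop _ _
  have hvlen : 1 ≤ v.length := by
    have h1 : (x.take (j : ℕ)).length = (j : ℕ) := by
      rw [List.length_take]; omega
    rw [hv, List.length_drop, h1]
    omega
  have huvw : (u ++ v) ++ w = x := by
    rw [huv, hwdef]
    exact List.take_append_drop _ _
  have hTuv : T (u ++ v) = T u := by rw [huv]; exact hfij.symm
  let rep : ℕ → List I := fun m => Nat.rec [] (fun _ ih => ih ++ v) m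
  have hrep0 : rep 0 = [] := rfl
  have hrepS : ∀ m, rep (m + 1) = rep m ++ v := fun m => rfl
  have hrep : ∀ m, T (u ++ rep m) = T u := by
    intro m
    induction m with
    | zero => rw [hrep0, List.append_nil]
    | succ m ih =>
      rw [hrepS, ← List.append_assoc]
      exact (hTcong (u ++ rep m) u v ih).trans hTuv
  have hTall : ∀ m, T ((u ++ rep m) ++ w) = T x := by
    intro m
    have h1 : T (u ++ rep m) = T (u ++ v) := (hrep m).trans hTuv.symm
    rw [hTcong (u ++ rep m) (u ++ v) w h1, huvw]
  have hlenrep : ∀ m, (rep m).length = m * v.length := by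
    intro m
    induction m with
    | zero => rw [hrep0]; simp
    | succ m ih => rw [hrepS, List.length_append, ih]; ring
  have hinj : Function.Injective (fun m => (u ++ rep m) ++ w) := by
    intro a b hab
    have h := congrArg List.length hab
    simp only [List.length_append, hlenrep] at h
    have : a * v.length = b * v.length := by omega
    exact Nat.eq_of_mul_eq_mul_right (by omega) this
  have hinf : {x' : List I | EqProj A 0 x x'}.Infinite :=
    Set.infinite_of_injective_forall_mem hinj
      (fun m => Set.mem_setOf_eq ▸ (hproj x ((u ++ rep m) ++ w)).2 (hTall m).symm)
  exact hinf hfin
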